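/- arXiv:1602.01029 — 2 statements merged into one kernel-verified Lean document; each statement's English description precedes it below -/
import Mathlib

section
/- If a graph G has the equidistant comparability property with constant C(G) and finite overlapping index O(G), then D_2(G) ≤ 1 + O(G)·C(G). -/
open scoped ENNReal

noncomputable def ballCard {V : Type*} (G : SimpleGraph V) (x : V) (r : ℕ) : ℕ :=
  {y | G.dist x y ≤ r}.ncard

noncomputable def dil {V : Type*} (G : SimpleGraph V) (k : ℕ) : ℝ≥0∞ :=
  ⨆ (x : V) (r : ℕ), (ballCard G x (k * r) : ℝ≥0∞) / (ballCard G x r : ℝ≥0∞)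

/-- The ECP constant `C(G)`. -/
noncomputable def ecpConst {V : Type*} (G : SimpleGraph V) : ℝ≥0∞ :=
  ⨆ (x : V) (y : V),
    (ballCard G x (G.dist x y) : ℝ≥0∞) / (ballCard G y (G.dist x y) : ℝ≥0∞)

/-- The ball determined by a (center, radius) pair. -/
def gball {V : Type*} (G : SimpleGraph V) (p : V × ℕ) : Set V := {y | G.dist p.1 y ≤ p.2}

/-- `m` is an overlapping bound for `G` if every family of balls admits a subfamily with
the same union and pointwise overlap at most `m`. -/
def OverlapBound {V : Type*} (G : SimpleGraph V) (m : ℕ) : Prop :=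
  ∀ S : Set (V × ℕ), ∃ I ⊆ S, (⋃ p ∈ I, gball G p) = (⋃ p ∈ S, gball G p) ∧
    ∀ z : V, ({p ∈ I | z ∈ gball G p}).encard ≤ m

/-- The overlapping index `O(G)`, as an extended natural number. -/
noncomputable def overIndex {V : Type*} (G : SimpleGraph V) : ℕ∞ :=
  sInf ((fun m : ℕ => (m : ℕ∞)) '' {m | OverlapBound G m})

/-- Along any walk there is a vertex roughly at prescribed distances from the ends. -/
lemma aux_walk {V : Type*} {G : SimpleGraph V} (hconn : G.Connected) :
    ∀ {x y : V} (p : G.Walk x y) (r : ℕ), r ≤ p.length →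
      ∃ z, G.dist x z ≤ r ∧ G.dist z y ≤ p.length - r := by
  intro x y p
  induction p with
  | nil =>
    rename_i u
    intro r hr
    exact ⟨u, by simp [SimpleGraph.dist_self], by simp [SimpleGraph.dist_self]⟩
  | @cons a b c h q ih =>
    intro r hr
    cases r with
    | zero =>
      refine ⟨a, by simp, ?_⟩
      simpa using G.dist_le (SimpleGraph.Walk.cons h q)
    | succ r' =>
      obtain ⟨z, h1, h2⟩ := ih r' (by simpa using hr)
      refine ⟨z, ?_, ?_⟩
      · calc G.dist a z ≤ G.dist a b + G.dist b z := hconn.dist_triangle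
          _ ≤ 1 + r' := by
              have hab : G.dist a b = 1 := SimpleGraph.dist_eq_one_iff_adj.mpr h
              omega
          _ = r' + 1 := by omega
      · simpa using h2

/-- A point at distance exactly `r` on a geodesic from `x` to `y`. -/
lemma exists_intermediate {V : Type*} {G : SimpleGraph V} (hconn : G.Connected)
    {x y : V} {r : ℕ} (h : r ≤ G.dist x y) :
    ∃ z, G.dist x z = r ∧ G.dist z y = G.dist x y - r := by
  obtain ⟨p, hp⟩ := hconn.exists_walk_length_eq_dist x y
  obtain ⟨z, h1, h2⟩ := aux_walk hconn p r (by omega)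
  rw [hp] at h2
  have htri : G.dist x y ≤ G.dist x z + G.dist z y := hconn.dist_triangle
  exact ⟨z, by omega, by omega⟩

/-- Balls in a locally finite connected graph are finite. -/
lemma ball_finite {V : Type*} {G : SimpleGraph V} (hconn : G.Connected)
    (hloc : ∀ x : V, (G.neighborSet x).Finite) (x : V) :
    ∀ r : ℕ, {y | G.dist x y ≤ r}.Finite := by
  intro r
  induction r with
  | zero =>
    refine (Set.finite_singleton x).subset ?_
    intro y hy
    have : G.dist x y = 0 := Nat.le_zero.mp hy
    have := (hconn.dist_eq_zero_iff).mp this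
    simp [this]
  | succ r ih =>
    have hsub : {y | G.dist x y ≤ r + 1} ⊆
        {y | G.dist x y ≤ r} ∪ ⋃ z ∈ {y | G.dist x y ≤ r}, G.neighborSet z := by
      intro y hy
      by_cases hle : G.dist x y ≤ r
      · exact Or.inl hle
      · have hd : G.dist x y = r + 1 := by
          have := hy; simp only [Set.mem_setOf_eq] at this; omega
        obtain ⟨z, h1, h2⟩ := exists_intermediate hconn (x := x) (y := y) (r := r) (by omega)
        rw [hd] at h2
        have hadj : G.Adj z y := SimpleGraph.dist_eq_one_iff_adj.mp (by omega)
        exact Or.inr (Set.mem_biUnion (by simpa using h1.le) hadj)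
    exact ((ih.union (ih.biUnion (fun z _ => hloc z)))).subset hsub

lemma ncard_biUnion_le {α β : Type*} (s : Finset β) (f : β → Set α) :
    (⋃ b ∈ s, f b).ncard ≤ ∑ b ∈ s, (f b).ncard := by
  classical
  induction s using Finset.induction_on with
  | empty => simp
  | @insert a s hnot ih =>
    calc (⋃ b ∈ insert a s, f b).ncard = (f a ∪ ⋃ b ∈ s, f b).ncard := by
          rw [Finset.set_biUnion_insert]
      _ ≤ (f a).ncard + (⋃ b ∈ s, f b).ncard := Set.ncard_union_le _ _
      _ ≤ (f a).ncard + ∑ b ∈ s, (f b).ncard := by omega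
      _ = ∑ b ∈ insert a s, (f b).ncard := by rw [Finset.sum_insert hnot]

theorem stmt3 {V : Type*} (G : SimpleGraph V) (hconn : G.Connected)
    (hloc : ∀ x : V, (G.neighborSet x).Finite) (hV : Infinite V)
    (hECP : ecpConst G < ⊤) (hO : overIndex G < ⊤) :
    dil G 2 ≤ 1 + (overIndex G : ℝ≥0∞) * ecpConst G := by
  classical
  -- extract a witness overlap bound m with (m : ℕ∞) ≤ overIndex G
  have hTne : {m | OverlapBound G m}.Nonempty := by
    by_contra h
    rw [Set.not_nonempty_iff_eq_empty] at h
    rw [overIndex, h] at hO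
    simp at hO
  set m : ℕ := sInf {m | OverlapBound G m} with hm_def
  have hm : OverlapBound G m := Nat.sInf_mem hTne
  have hmle : (m : ℕ∞) ≤ overIndex G := by
    apply le_sInf
    rintro b ⟨k, hk, rfl⟩
    show (m : ℕ∞) ≤ (k : ℕ∞)
    exact_mod_cast Nat.sInf_le hk
  have hmle' : (m : ℝ≥0∞) ≤ (overIndex G : ℝ≥0∞) := by
    calc (m : ℝ≥0∞) = ((m : ℕ∞) : ℝ≥0∞) := (ENat.toENNReal_coe m).symm
      _ ≤ _ := ENat.toENNReal_le.mpr hmle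
  rw [dil]
  refine iSup_le fun x => iSup_le fun r => ?_
  have hBfin : ∀ (z : V) (s : ℕ), {y | G.dist z y ≤ s}.Finite := fun z s =>
    ball_finite hconn hloc z s
  have hb0 : (ballCard G x r : ℝ≥0∞) ≠ 0 := by
    have : 0 < ballCard G x r := by
      rw [ballCard, Set.ncard_pos (hBfin x r)]
      exact ⟨x, by simp [SimpleGraph.dist_self]⟩
    exact_mod_cast this.ne'
  rw [ENNReal.div_le_iff hb0 (ENNReal.natCast_ne_top _)]
  -- set up the family of balls
  set S : Set (V × ℕ) := {p | p.2 = r ∧ G.dist x p.1 = r} with hS_def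
  obtain ⟨I, hIS, hUnion, hOv⟩ := hm S
  -- I is finite of cardinality ≤ m
  have hIeq : {p ∈ I | x ∈ gball G p} = I := by
    ext p
    simp only [Set.mem_setOf_eq, Set.mem_sep_iff, and_iff_left_iff_imp]
    intro hpI
    obtain ⟨h2, h1⟩ := hIS hpI
    show G.dist p.1 x ≤ p.2
    rw [SimpleGraph.dist_comm, h1, h2]
  have hIenc : I.encard ≤ m := by rw [← hIeq]; exact hOv x
  have hIfin : I.Finite := Set.finite_of_encard_le_coe hIenc
  have hIcard : hIfin.toFinset.card ≤ m := by
    have := hIenc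
    rw [hIfin.encard_eq_coe_toFinset_card] at this
    exact_mod_cast this
  -- covering
  have hcover : {y | G.dist x y ≤ 2 * r} ⊆
      {y | G.dist x y ≤ r} ∪ ⋃ p ∈ hIfin.toFinset, gball G p := by
    intro y hy
    simp only [Set.mem_setOf_eq] at hy
    by_cases hle : G.dist x y ≤ r
    · exact Or.inl hle
    · right
      obtain ⟨z, h1, h2⟩ := exists_intermediate hconn (x := x) (y := y) (r := r) (by omega)
      have hymem : y ∈ ⋃ p ∈ S, gball G p := by
        refine Set.mem_biUnion (show ((z, r) : V × ℕ) ∈ S from ⟨rfl, h1⟩) ?_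
        show G.dist z y ≤ r
        omega
      rw [← hUnion] at hymem
      simpa [Set.mem_iUnion] using hymem
  -- cardinality estimate in ℕ
  have hcount : ballCard G x (2 * r) ≤
      ballCard G x r + ∑ p ∈ hIfin.toFinset, (gball G p).ncard := by
    calc ballCard G x (2 * r)
        ≤ ({y | G.dist x y ≤ r} ∪ ⋃ p ∈ hIfin.toFinset, gball G p).ncard := by
          refine Set.ncard_le_ncard hcover ?_
          refine (hBfin x r).union ?_
          refine Set.Finite.biUnion hIfin.toFinset.finite_toSet fun p hp => ?_
          have h2 : p.2 = r := (hIS (hIfin.mem_toFinset.mp (by simpa using hp))).1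
          have : gball G p = {y | G.dist p.1 y ≤ r} := by rw [gball, h2]
          rw [this]; exact hBfin p.1 r
      _ ≤ {y | G.dist x y ≤ r}.ncard + (⋃ p ∈ hIfin.toFinset, gball G p).ncard :=
          Set.ncard_union_le _ _
      _ ≤ ballCard G x r + ∑ p ∈ hIfin.toFinset, (gball G p).ncard := by
          have := ncard_biUnion_le hIfin.toFinset (fun p => gball G p)
          rw [ballCard]; omega
  -- each ball in the family has size ≤ C * ballCard G x r
  have hterm : ∀ p ∈ hIfin.toFinset,
      ((gball G p).ncard : ℝ≥0∞) ≤ ecpConst G * (ballCard G x r : ℝ≥0∞) := by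
    intro p hp
    obtain ⟨h2, h1⟩ := hIS (hIfin.mem_toFinset.mp hp)
    have hd : G.dist p.1 x = r := by rw [SimpleGraph.dist_comm]; exact h1
    have hgb : (gball G p).ncard = ballCard G p.1 r := by
      rw [gball, ballCard, h2]
    have hratio : (ballCard G p.1 (G.dist p.1 x) : ℝ≥0∞) /
        (ballCard G x (G.dist p.1 x) : ℝ≥0∞) ≤ ecpConst G := by
      exact le_iSup₂ (f := fun a b => (ballCard G a (G.dist a b) : ℝ≥0∞) /
        (ballCard G b (G.dist a b) : ℝ≥0∞)) p.1 x
    rw [hd] at hratio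
    rw [ENNReal.div_le_iff hb0 (ENNReal.natCast_ne_top _)] at hratio
    rw [hgb]
    exact hratio
  -- put it all together in ℝ≥0∞
  calc (ballCard G x (2 * r) : ℝ≥0∞)
      ≤ (ballCard G x r : ℝ≥0∞) + ∑ p ∈ hIfin.toFinset, ((gball G p).ncard : ℝ≥0∞) := by
        rw [← Nat.cast_sum]
        exact_mod_cast hcount
    _ ≤ (ballCard G x r : ℝ≥0∞) +
        (hIfin.toFinset.card : ℝ≥0∞) * (ecpConst G * (ballCard G x r : ℝ≥0∞)) := by
        gcongr
        calc ∑ p ∈ hIfin.toFinset, ((gball G p).ncard : ℝ≥0∞)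
            ≤ ∑ _p ∈ hIfin.toFinset, ecpConst G * (ballCard G x r : ℝ≥0∞) :=
              Finset.sum_le_sum hterm
          _ = (hIfin.toFinset.card : ℝ≥0∞) * (ecpConst G * (ballCard G x r : ℝ≥0∞)) := by
              rw [Finset.sum_const, nsmul_eq_mul]
    _ ≤ (ballCard G x r : ℝ≥0∞) +
        (overIndex G : ℝ≥0∞) * ecpConst G * (ballCard G x r : ℝ≥0∞) := by
        rw [mul_assoc]
        gcongr
        exact le_trans (by exact_mod_cast Nat.cast_le.mpr hIcard) hmle'
    _ = (1 + (overIndex G : ℝ≥0∞) * ecpConst G) * (ballCard G x r : ℝ≥0∞) := by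
        ring
end

section
/- If a graph G has the equidistant comparability property with constant C(G), then for every vertex x, the centered Hardy-Littlewood maximal function of the Dirac delta at x satisfies ‖M_G δ_x‖_{1,∞} ≤ C(G); that is, for every λ > 0, λ·|{y : M_G δ_x(y) > λ}| ≤ C(G). -/
open scoped ENNReal

/-- The centered Hardy-Littlewood maximal operator on the graph `G`. -/
noncomputable def maxFn {V : Type*} (G : SimpleGraph V) (f : V → ℝ≥0∞) (y : V) : ℝ≥0∞ :=
  ⨆ r : ℕ, (∑' z : {z : V // G.dist y z ≤ r}, f z.1) / (ballCard G y r : ℝ≥0∞)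

/-- Balls are finite in a connected locally finite graph. -/
lemma ballFinite {V : Type*} (G : SimpleGraph V) (hconn : G.Connected)
    (hloc : ∀ x : V, (G.neighborSet x).Finite) (x : V) :
    ∀ r : ℕ, {y | G.dist x y ≤ r}.Finite := by
  intro r
  induction r with
  | zero =>
    apply Set.Finite.subset (Set.finite_singleton x)
    intro y hy
    simp only [Set.mem_setOf_eq, Nat.le_zero] at hy
    rcases (SimpleGraph.dist_eq_zero_iff_eq_or_not_reachable).1 hy with h | h
    · simp [h.symm]
    · exact absurd (hconn x y) h
  | succ r ih =>
    have hsub : {y | G.dist x y ≤ r + 1} ⊆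
        {y | G.dist x y ≤ r} ∪ ⋃ z ∈ {y | G.dist x y ≤ r}, G.neighborSet z := by
      intro y hy
      simp only [Set.mem_setOf_eq] at hy
      by_cases h' : G.dist x y ≤ r
      · exact Or.inl h'
      · have hd : G.dist x y = r + 1 := le_antisymm hy (Nat.not_le.1 h')
        obtain ⟨p, hp⟩ := hconn.exists_walk_length_eq_dist x y
        have hq : p.reverse.length = r + 1 := by
          rw [SimpleGraph.Walk.length_reverse, hp, hd]
        set q := p.reverse with hqdef
        clear_value q
        cases q with
        | nil => simp at hq
        | cons ha q' =>
          rename_i z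
          right
          simp only [SimpleGraph.Walk.length_cons, Nat.add_right_cancel_iff] at hq
          refine Set.mem_biUnion (show z ∈ {y | G.dist x y ≤ r} from ?_) ?_
          · simp only [Set.mem_setOf_eq]
            calc G.dist x z = G.dist z x := SimpleGraph.dist_comm
            _ ≤ q'.length := SimpleGraph.dist_le q'
            _ = r := hq
          · exact ha.symm
    exact Set.Finite.subset (ih.union (ih.biUnion (fun z _ => hloc z))) hsub

lemma ballCard_mono {V : Type*} (G : SimpleGraph V) (hconn : G.Connected)
    (hloc : ∀ x : V, (G.neighborSet x).Finite) (x : V) {r s : ℕ} (h : r ≤ s) :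
    ballCard G x r ≤ ballCard G x s :=
  Set.ncard_le_ncard (fun _ hy => le_trans hy h) (ballFinite G hconn hloc x s)

lemma key_ineq {V : Type*} (G : SimpleGraph V) (hconn : G.Connected)
    (hloc : ∀ x : V, (G.neighborSet x).Finite) (x y : V) {l : ℝ≥0∞}
    (hl : l < maxFn G (Set.indicator {x} 1) y) :
    l < ((ballCard G y (G.dist y x) : ℝ≥0∞))⁻¹ := by
  rw [maxFn, lt_iSup_iff] at hl
  obtain ⟨r, hr⟩ := hl
  by_cases hx : G.dist y x ≤ r
  · have hs : (∑' z : {z : V // G.dist y z ≤ r}, Set.indicator {x} (1 : V → ℝ≥0∞) z.1) = 1 := by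
      rw [tsum_eq_single (⟨x, hx⟩ : {z : V // G.dist y z ≤ r})]
      · simp
      · intro b hb
        have : b.1 ≠ x := fun h => hb (Subtype.ext h)
        simp [Set.indicator_apply, this]
    rw [hs] at hr
    calc l < 1 / (ballCard G y r : ℝ≥0∞) := hr
    _ = ((ballCard G y r : ℝ≥0∞))⁻¹ := one_div _
    _ ≤ ((ballCard G y (G.dist y x) : ℝ≥0∞))⁻¹ := by
        rw [ENNReal.inv_le_inv]
        exact_mod_cast ballCard_mono G hconn hloc y hx
  · have hs : (∑' z : {z : V // G.dist y z ≤ r}, Set.indicator {x} (1 : V → ℝ≥0∞) z.1) = 0 := by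
      rw [show (0 : ℝ≥0∞) = ∑' _ : {z : V // G.dist y z ≤ r}, (0 : ℝ≥0∞) from tsum_zero.symm]
      apply tsum_congr
      intro b
      have : b.1 ≠ x := fun h => hx (h ▸ b.2)
      simp [Set.indicator_apply, this]
    rw [hs, ENNReal.zero_div] at hr
    exact absurd hr (by simp)

lemma finset_bound {V : Type*} (G : SimpleGraph V) (hconn : G.Connected)
    (hloc : ∀ x : V, (G.neighborSet x).Finite) (x : V) (l : ℝ≥0∞) (F : Finset V)
    (hF : ↑F ⊆ {y : V | l < maxFn G (Set.indicator {x} 1) y}) :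
    l * (F.card : ℝ≥0∞) ≤ ecpConst G := by
  rcases F.eq_empty_or_nonempty with rfl | hne
  · simp
  obtain ⟨y₀, hy₀F, hy₀max⟩ := F.exists_max_image (fun y => G.dist x y) hne
  set D := G.dist x y₀ with hD
  have hFsub : (↑F : Set V) ⊆ {y | G.dist x y ≤ D} := fun y hy => hy₀max y hy
  have hcard : (F.card : ℝ≥0∞) ≤ (ballCard G x D : ℝ≥0∞) := by
    have := Set.ncard_le_ncard hFsub (ballFinite G hconn hloc x D)
    rw [Set.ncard_coe_finset] at this
    exact_mod_cast this
  have hkey : l ≤ ((ballCard G y₀ D : ℝ≥0∞))⁻¹ := by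
    have := key_ineq G hconn hloc x y₀ (hF hy₀F)
    rw [SimpleGraph.dist_comm] at this
    exact this.le
  calc l * (F.card : ℝ≥0∞)
      ≤ ((ballCard G y₀ D : ℝ≥0∞))⁻¹ * (ballCard G x D : ℝ≥0∞) := mul_le_mul' hkey hcard
    _ = (ballCard G x D : ℝ≥0∞) / (ballCard G y₀ D : ℝ≥0∞) := by
        rw [div_eq_mul_inv, mul_comm]
    _ ≤ ecpConst G := by
        rw [ecpConst]
        exact le_iSup₂ (f := fun a b => (ballCard G a (G.dist a b) : ℝ≥0∞) /
          (ballCard G b (G.dist a b) : ℝ≥0∞)) x y₀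

theorem stmt7 {V : Type*} (G : SimpleGraph V) (hconn : G.Connected)
    (hloc : ∀ x : V, (G.neighborSet x).Finite) (hV : Infinite V)
    (hECP : ecpConst G < ⊤) (x : V) :
    ∀ l : ℝ≥0∞, 0 < l →
      l * (({y : V | l < maxFn G (Set.indicator {x} 1) y}).encard : ℝ≥0∞) ≤ ecpConst G := by
  intro l hl
  set E := {y : V | l < maxFn G (Set.indicator {x} 1) y} with hE
  by_cases hfin : E.Finite
  · rw [hfin.encard_eq_coe_toFinset_card]
    exact finset_bound G hconn hloc x l hfin.toFinset (by simp [hE])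
  · exfalso
    have hinf : E.Infinite := hfin
    obtain ⟨n, hn⟩ := ENNReal.exists_nat_gt
      (show ecpConst G / l ≠ ⊤ from (ENNReal.div_lt_top hECP.ne hl.ne').ne)
    obtain ⟨F, hFsub, hFcard⟩ := hinf.exists_subset_card_eq (n + 1)
    have h1 : l * (F.card : ℝ≥0∞) ≤ ecpConst G := finset_bound G hconn hloc x l F hFsub
    have h2 : ecpConst G < l * (F.card : ℝ≥0∞) := by
      have hdiv : ecpConst G / l < (n + 1 : ℕ) := by
        calc ecpConst G / l < (n : ℝ≥0∞) := hn
        _ ≤ ((n + 1 : ℕ) : ℝ≥0∞) := by exact_mod_cast Nat.le_succ n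
      have := (ENNReal.div_lt_iff (Or.inl hl.ne') (Or.inr hECP.ne)).1 hdiv
      rw [hFcard, mul_comm]
      exact_mod_cast this
    exact absurd h1 (not_le.2 h2)
end
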